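/- Let f : ℝ^{n+1}_+ → ℝ be measurable, α > 0, and for x ∈ ℝⁿ define C(f)(x) = sup_{B ∋ x} (|B|⁻¹ ∫_{B̂} |f(y,t)|² dy dt/t)^{1/2} (supremum over balls containing x, B̂ the tent over B) and the truncated cone square function A_h^{(α)}(f)(x) = (∫₀^h ∫_{|x−y|<αt} |f(y,t)|² dy dt/t^{n+1})^{1/2}. Then C(f)(x) ≂ sup_{B ∋ x} (|B|⁻¹ ∫_B A_{r(B)}^{(α)}(f)(z)² dz)^{1/2}, with implicit constants depending only on α and n. -/

import Mathlib

/-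
By Tonelli, `∫_B A_h(f)² = ∫∫_{0<t<h} |f(y,t)|² t^{-n-1} |B ∩ B(y, αt)| dy dt`, and
`|B(y, αt)| = αⁿ tⁿ |B(0, 1)|` turns the cone weight `t^{-n-1}` into the tent weight `t⁻¹`.
If `(y, t)` lies in the tent over `B(z, ρ)`, then `B(y, αt) ⊆ B(z, (1 + α)ρ)`; conversely, if
`t < ρ` and `B(y, αt)` meets `B(z, ρ)`, then `(y, t)` lies in the tent over `B(z, (2 + α)ρ)`.
Dilating a ball by a fixed factor keeps `x` inside and multiplies its volume by a fixed factor,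
so the two suprema are comparable.
-/

open MeasureTheory ENNReal

/-- The square of the truncated cone square function
`A_h^{(α)}(f)(x)² = ∫₀^h ∫_{|x−y|<αt} |f(y,t)|² dy dt / t^{n+1}`. -/
noncomputable def coneSq (n : ℕ) (α h : ℝ) (f : EuclideanSpace ℝ (Fin n) × ℝ → ℝ)
    (x : EuclideanSpace ℝ (Fin n)) : ℝ≥0∞ :=
  ∫⁻ p in {p : EuclideanSpace ℝ (Fin n) × ℝ | 0 < p.2 ∧ p.2 < h ∧ dist x p.1 < α * p.2},
    ENNReal.ofReal (f p ^ 2 / p.2 ^ (n + 1))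

/-- The Carleson-type functional
`C(f)(x) = sup_{B ∋ x} (|B|⁻¹ ∫_{B̂} |f(y,t)|² dy dt / t)^{1/2}`, the supremum being over
balls containing `x` and `B̂` denoting the tent over `B`. -/
noncomputable def carlesonC (n : ℕ) (f : EuclideanSpace ℝ (Fin n) × ℝ → ℝ)
    (x : EuclideanSpace ℝ (Fin n)) : ℝ≥0∞ :=
  ⨆ (z : EuclideanSpace ℝ (Fin n)) (ρ : ℝ) (_ : 0 < ρ) (_ : x ∈ Metric.ball z ρ),
    ((volume (Metric.ball z ρ))⁻¹ *
      ∫⁻ p in {p : EuclideanSpace ℝ (Fin n) × ℝ | 0 < p.2 ∧ dist z p.1 + p.2 < ρ},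
        ENNReal.ofReal (f p ^ 2 / p.2)) ^ (1 / 2 : ℝ)

/-- The averaged truncated cone functional
`sup_{B ∋ x} (|B|⁻¹ ∫_B A_{r(B)}^{(α)}(f)(z)² dz)^{1/2}`. -/
noncomputable def avgConeC (n : ℕ) (α : ℝ) (f : EuclideanSpace ℝ (Fin n) × ℝ → ℝ)
    (x : EuclideanSpace ℝ (Fin n)) : ℝ≥0∞ :=
  ⨆ (z : EuclideanSpace ℝ (Fin n)) (ρ : ℝ) (_ : 0 < ρ) (_ : x ∈ Metric.ball z ρ),
    ((volume (Metric.ball z ρ))⁻¹ * ∫⁻ y in Metric.ball z ρ, coneSq n α ρ f y) ^ (1 / 2 : ℝ)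

open Metric Set

section PseudoMetricSpace

variable {X : Type*} [PseudoMetricSpace X]

def tent (z : X) (ρ : ℝ) : Set (X × ℝ) := {p | 0 < p.2 ∧ dist z p.1 + p.2 < ρ}

theorem isOpen_tent (z : X) (ρ : ℝ) : IsOpen (tent z ρ) :=
  (isOpen_lt continuous_const continuous_snd).inter
    (isOpen_lt ((continuous_const.dist continuous_fst).add continuous_snd) continuous_const)

theorem mul_iSup_ball_rpow_le_mul {F G : X → ℝ → ℝ≥0∞} {c d : ℝ≥0∞} {k : ℝ} (hk : 1 ≤ k)
    (h : ∀ z ρ, 0 < ρ → c * F z ρ ≤ d * G z (k * ρ)) (x : X) :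
    c ^ (1 / 2 : ℝ) * (⨆ (z : X) (ρ : ℝ) (_ : 0 < ρ) (_ : x ∈ ball z ρ), F z ρ ^ (1 / 2 : ℝ)) ≤
      d ^ (1 / 2 : ℝ) * ⨆ (z : X) (ρ : ℝ) (_ : 0 < ρ) (_ : x ∈ ball z ρ), G z ρ ^ (1 / 2 : ℝ) := by
  simp only [ENNReal.mul_iSup]
  refine iSup₂_le fun z ρ => iSup₂_le fun hρ hx => ?_
  have hkρ : 0 < k * ρ := by positivity
  have hxk : x ∈ ball z (k * ρ) := ball_subset_ball (le_mul_of_one_le_left hρ.le hk) hx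
  calc c ^ (1 / 2 : ℝ) * F z ρ ^ (1 / 2 : ℝ) = (c * F z ρ) ^ (1 / 2 : ℝ) :=
        (ENNReal.mul_rpow_of_nonneg _ _ (by norm_num)).symm
    _ ≤ (d * G z (k * ρ)) ^ (1 / 2 : ℝ) := ENNReal.rpow_le_rpow (h z ρ hρ) (by norm_num)
    _ = d ^ (1 / 2 : ℝ) * G z (k * ρ) ^ (1 / 2 : ℝ) := ENNReal.mul_rpow_of_nonneg _ _ (by norm_num)
    _ ≤ _ := le_iSup₂_of_le z (k * ρ) <|
      le_iSup₂_of_le (f := fun (_ : 0 < k * ρ) (_ : x ∈ ball z (k * ρ)) => _) hkρ hxk le_rfl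

end PseudoMetricSpace

section Fubini

variable {X : Type*} [PseudoMetricSpace X] [MeasurableSpace X] [BorelSpace X]
  [SecondCountableTopology X]

theorem lintegral_lintegral_cone_eq (μ : Measure X) (ν : Measure (X × ℝ)) [SFinite μ] [SFinite ν]
    {g : X × ℝ → ℝ≥0∞} (hg : Measurable g) (α h : ℝ) (s : Set X) :
    ∫⁻ x in s, ∫⁻ p in {p : X × ℝ | 0 < p.2 ∧ p.2 < h ∧ dist x p.1 < α * p.2}, g p ∂ν ∂μ =
      ∫⁻ p in {p : X × ℝ | 0 < p.2 ∧ p.2 < h}, g p * μ (s ∩ ball p.1 (α * p.2)) ∂ν := by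
  set S : Set (X × ℝ) := {p | 0 < p.2 ∧ p.2 < h}
  set W : Set (X × (X × ℝ)) := {q | dist q.1 q.2.1 < α * q.2.2}
  have hW : MeasurableSet W :=
    (isOpen_lt (continuous_fst.dist continuous_snd.fst)
      (continuous_const.mul continuous_snd.snd)).measurableSet
  have hcone : ∀ x, ∫⁻ p in {p : X × ℝ | 0 < p.2 ∧ p.2 < h ∧ dist x p.1 < α * p.2}, g p ∂ν =
      ∫⁻ p in S, W.indicator (fun q => g q.2) (x, p) ∂ν := by
    intro x
    have hC : MeasurableSet {p : X × ℝ | dist x p.1 < α * p.2} :=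
      (isOpen_lt (continuous_const.dist continuous_fst)
        (continuous_const.mul continuous_snd)).measurableSet
    change _ = ∫⁻ p in S, {p : X × ℝ | dist x p.1 < α * p.2}.indicator g p ∂ν
    rw [lintegral_indicator hC, Measure.restrict_restrict hC]
    congr 2
    ext p
    simp only [S, mem_inter_iff, mem_ofPred_eq]
    tauto
  have hslice : ∀ p, ∫⁻ x in s, W.indicator (fun q => g q.2) (x, p) ∂μ =
      g p * μ (s ∩ ball p.1 (α * p.2)) := by
    intro p
    have hball : (fun x => W.indicator (fun q => g q.2) (x, p)) =
        (ball p.1 (α * p.2)).indicator fun _ => g p := by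
      ext x; simp [W, indicator, mem_ball]
    rw [hball, lintegral_indicator_const measurableSet_ball,
      Measure.restrict_apply measurableSet_ball, inter_comm]
  simp_rw [hcone]
  have hm : Measurable (Function.uncurry fun x p => W.indicator (fun q => g q.2) (x, p)) :=
    (hg.comp measurable_snd).indicator hW
  rw [lintegral_lintegral_swap hm.aemeasurable]
  simp_rw [hslice]

end Fubini

section Euclidean

variable {n : ℕ}

noncomputable def unitBallVolume (n : ℕ) : ℝ :=
  (volume (ball (0 : EuclideanSpace ℝ (Fin n)) 1)).toReal

theorem ofReal_unitBallVolume :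
    ENNReal.ofReal (unitBallVolume n) = volume (ball (0 : EuclideanSpace ℝ (Fin n)) 1) :=
  ENNReal.ofReal_toReal measure_ball_lt_top.ne

theorem unitBallVolume_pos : 0 < unitBallVolume n :=
  ENNReal.toReal_pos (measure_ball_pos _ _ one_pos).ne' measure_ball_lt_top.ne

theorem volume_ball_mul (z : EuclideanSpace ℝ (Fin n)) {k : ℝ} (hk : 0 < k) (ρ : ℝ) :
    volume (ball z (k * ρ)) = ENNReal.ofReal (k ^ n) * volume (ball z ρ) := by
  rw [Measure.addHaar_ball_mul_of_pos _ _ hk, finrank_euclideanSpace_fin,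
    Measure.addHaar_ball_center volume z ρ]

theorem ofReal_div_pow_succ_mul_volume_ball {α t : ℝ} (hα : 0 < α) (ht : 0 < t) (a : ℝ)
    (y : EuclideanSpace ℝ (Fin n)) :
    ENNReal.ofReal (a / t ^ (n + 1)) * volume (ball y (α * t)) =
      ENNReal.ofReal (α ^ n * unitBallVolume n) * ENNReal.ofReal (a / t) := by
  have hω := unitBallVolume_pos (n := n)
  rw [Measure.addHaar_ball_of_pos _ _ (mul_pos hα ht), finrank_euclideanSpace_fin,
    ← ofReal_unitBallVolume, ← ENNReal.ofReal_mul (by positivity),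
    ← ENNReal.ofReal_mul' (by positivity), ← ENNReal.ofReal_mul (by positivity)]
  congr 1
  field_simp
  ring

theorem lintegral_ball_coneSq (α h : ℝ) {f : EuclideanSpace ℝ (Fin n) × ℝ → ℝ}
    (hf : Measurable f) (z : EuclideanSpace ℝ (Fin n)) (ρ : ℝ) :
    ∫⁻ y in ball z ρ, coneSq n α h f y =
      ∫⁻ p in {p : EuclideanSpace ℝ (Fin n) × ℝ | 0 < p.2 ∧ p.2 < h},
        ENNReal.ofReal (f p ^ 2 / p.2 ^ (n + 1)) * volume (ball z ρ ∩ ball p.1 (α * p.2)) :=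
  lintegral_lintegral_cone_eq volume volume
    (g := fun p => ENNReal.ofReal (f p ^ 2 / p.2 ^ (n + 1))) (by fun_prop) α h (ball z ρ)

theorem lintegral_tent_le_lintegral_coneSq {α : ℝ} (hα : 0 < α)
    {f : EuclideanSpace ℝ (Fin n) × ℝ → ℝ} (hf : Measurable f) (z : EuclideanSpace ℝ (Fin n))
    (ρ : ℝ) :
    ENNReal.ofReal (α ^ n * unitBallVolume n) * ∫⁻ p in tent z ρ, ENNReal.ofReal (f p ^ 2 / p.2) ≤
      ∫⁻ y in ball z ((1 + α) * ρ), coneSq n α ((1 + α) * ρ) f y := by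
  rw [lintegral_ball_coneSq α _ hf, ← lintegral_const_mul' _ _ ENNReal.ofReal_ne_top]
  calc _ = ∫⁻ p in tent z ρ, ENNReal.ofReal (f p ^ 2 / p.2 ^ (n + 1)) *
        volume (ball z ((1 + α) * ρ) ∩ ball p.1 (α * p.2)) := by
        refine setLIntegral_congr_fun (isOpen_tent z ρ).measurableSet fun p ⟨ht, hp⟩ => ?_
        have hsub : ball p.1 (α * p.2) ⊆ ball z ((1 + α) * ρ) := by
          intro w hw
          have htρ : p.2 < ρ := by linarith [dist_nonneg (x := z) (y := p.1)]
          have hαt := mul_lt_mul_of_pos_left htρ hα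
          have htri := dist_triangle w p.1 z
          rw [mem_ball] at hw ⊢
          rw [dist_comm] at hp
          linarith
        rw [inter_eq_self_of_subset_right hsub, ofReal_div_pow_succ_mul_volume_ball hα ht]
    _ ≤ _ := by
        refine lintegral_mono_set fun p ⟨ht, hp⟩ => ⟨ht, ?_⟩
        nlinarith [dist_nonneg (x := z) (y := p.1)]

theorem lintegral_coneSq_le_lintegral_tent {α : ℝ} (hα : 0 < α)
    {f : EuclideanSpace ℝ (Fin n) × ℝ → ℝ} (hf : Measurable f) (z : EuclideanSpace ℝ (Fin n))
    (ρ : ℝ) :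
    ∫⁻ y in ball z ρ, coneSq n α ρ f y ≤ ENNReal.ofReal (α ^ n * unitBallVolume n) *
      ∫⁻ p in tent z ((2 + α) * ρ), ENNReal.ofReal (f p ^ 2 / p.2) := by
  rw [lintegral_ball_coneSq α _ hf, ← lintegral_const_mul' _ _ ENNReal.ofReal_ne_top,
    ← lintegral_indicator (isOpen_tent _ _).measurableSet]
  refine (setLIntegral_mono' ?_ fun p hp => ?_).trans (setLIntegral_le_lintegral _ _)
  · exact (measurableSet_lt measurable_const measurable_snd).inter
      (measurableSet_lt measurable_snd measurable_const)
  obtain ⟨ht, htρ⟩ := hp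
  by_cases hpT : p ∈ tent z ((2 + α) * ρ)
  · rw [indicator_of_mem hpT, ← ofReal_div_pow_succ_mul_volume_ball hα ht]
    gcongr
    exact inter_subset_right
  · have hdisj : ball z ρ ∩ ball p.1 (α * p.2) = ∅ := by
      refine eq_empty_of_forall_notMem fun w ⟨hwz, hwp⟩ => hpT ⟨ht, ?_⟩
      have htri := dist_triangle z w p.1
      have hαt := mul_lt_mul_of_pos_left htρ hα
      rw [mem_ball] at hwz hwp
      rw [dist_comm] at hwz
      linarith
    simp [hdisj, indicator_of_notMem hpT]

theorem tent_average_le_coneSq_average {α : ℝ} (hα : 0 < α)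
    {f : EuclideanSpace ℝ (Fin n) × ℝ → ℝ} (hf : Measurable f) (z : EuclideanSpace ℝ (Fin n))
    (ρ : ℝ) :
    ENNReal.ofReal (α ^ n * unitBallVolume n / (1 + α) ^ n) *
        ((volume (ball z ρ))⁻¹ * ∫⁻ p in tent z ρ, ENNReal.ofReal (f p ^ 2 / p.2)) ≤
      (volume (ball z ((1 + α) * ρ)))⁻¹ *
        ∫⁻ y in ball z ((1 + α) * ρ), coneSq n α ((1 + α) * ρ) f y := by
  have ha : 0 < (1 + α) ^ n := by positivity
  rw [volume_ball_mul z (by positivity), ENNReal.mul_inv (.inl (ENNReal.ofReal_pos.2 ha).ne')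
    (.inl ENNReal.ofReal_ne_top), ENNReal.ofReal_div_of_pos ha, div_eq_mul_inv]
  calc _ = (ENNReal.ofReal ((1 + α) ^ n))⁻¹ * (volume (ball z ρ))⁻¹ *
        (ENNReal.ofReal (α ^ n * unitBallVolume n) *
          ∫⁻ p in tent z ρ, ENNReal.ofReal (f p ^ 2 / p.2)) := by ring
    _ ≤ _ := by gcongr; exact lintegral_tent_le_lintegral_coneSq hα hf z ρ

theorem coneSq_average_le_tent_average {α : ℝ} (hα : 0 < α)
    {f : EuclideanSpace ℝ (Fin n) × ℝ → ℝ} (hf : Measurable f) (z : EuclideanSpace ℝ (Fin n))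
    (ρ : ℝ) :
    (volume (ball z ρ))⁻¹ * ∫⁻ y in ball z ρ, coneSq n α ρ f y ≤
      ENNReal.ofReal ((2 + α) ^ n * (α ^ n * unitBallVolume n)) *
        ((volume (ball z ((2 + α) * ρ)))⁻¹ *
          ∫⁻ p in tent z ((2 + α) * ρ), ENNReal.ofReal (f p ^ 2 / p.2)) := by
  have hb : 0 < (2 + α) ^ n := by positivity
  have hb0 : ENNReal.ofReal ((2 + α) ^ n) ≠ 0 := (ENNReal.ofReal_pos.2 hb).ne'
  rw [volume_ball_mul z (by positivity), ENNReal.mul_inv (.inl hb0) (.inl ENNReal.ofReal_ne_top),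
    ENNReal.ofReal_mul hb.le]
  calc _ ≤ (volume (ball z ρ))⁻¹ * (ENNReal.ofReal (α ^ n * unitBallVolume n) *
        ∫⁻ p in tent z ((2 + α) * ρ), ENNReal.ofReal (f p ^ 2 / p.2)) := by
        gcongr; exact lintegral_coneSq_le_lintegral_tent hα hf z ρ
    _ = _ := by
        rw [← one_mul (_ * _), ← ENNReal.mul_inv_cancel hb0 ENNReal.ofReal_ne_top]
        ring

end Euclidean

/-- `C(f)(x) ≂ sup_{B ∋ x} (|B|⁻¹ ∫_B A_{r(B)}^{(α)}(f)²)^{1/2}` with implicit constants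
depending only on `α` and `n`. -/
theorem stmt13 (n : ℕ) (α : ℝ) (hα : 0 < α) :
    ∃ c₁ c₂ : ℝ, 0 < c₁ ∧ 0 < c₂ ∧
      ∀ f : EuclideanSpace ℝ (Fin n) × ℝ → ℝ, Measurable f →
        ∀ x : EuclideanSpace ℝ (Fin n),
          ENNReal.ofReal c₁ * carlesonC n f x ≤ avgConeC n α f x ∧
          avgConeC n α f x ≤ ENNReal.ofReal c₂ * carlesonC n f x := by
  have hω := unitBallVolume_pos (n := n)
  refine ⟨(α ^ n * unitBallVolume n / (1 + α) ^ n) ^ (1 / 2 : ℝ),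
    ((2 + α) ^ n * (α ^ n * unitBallVolume n)) ^ (1 / 2 : ℝ), by positivity, by positivity,
    fun f hf x => ⟨?_, ?_⟩⟩
  · rw [← ENNReal.ofReal_rpow_of_nonneg (by positivity) (by norm_num),
      ← one_mul (avgConeC n α f x), ← ENNReal.one_rpow (1 / 2 : ℝ)]
    exact mul_iSup_ball_rpow_le_mul (k := 1 + α) (by linarith) (fun z ρ _ => by
      rw [one_mul]; exact tent_average_le_coneSq_average hα hf z ρ) x
  · rw [← ENNReal.ofReal_rpow_of_nonneg (by positivity) (by norm_num),
      ← one_mul (avgConeC n α f x), ← ENNReal.one_rpow (1 / 2 : ℝ)]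
    exact mul_iSup_ball_rpow_le_mul (k := 2 + α) (by linarith) (fun z ρ _ => by
      rw [one_mul]; exact coneSq_average_le_tent_average hα hf z ρ) x
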